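/- arXiv:1907.03625 — 2 statements merged into one kernel-verified Lean document; each statement's English description precedes it below -/
import Mathlib

section
/- Let X and Y be associated random variables with absolutely continuous distributions whose marginal densities f_X and f_Y are bounded by M, and suppose Cov(X,Y) > 0. Then for all x, y ∈ ℝ, Cov(1_{(−∞,x]}(X), 1_{(−∞,y]}(Y)) ≤ 3·2^{−2/3}·M*·Cov(X,Y)^{1/3}, where M* = max(2/π², 45M); this follows from optimizing T ↦ M*(T²·Cov(X,Y) + 1/T) over T > 0. -/
/-!
Approximate the indicators of `(-∞, x]` and `(-∞, y]` from above by the piecewise linear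
functions `rampIic T x`, `rampIic T y` of slope `-T`. For functions `F, G` with `u ↦ T u - F u`
and `u ↦ T u - G u` monotone, association applied to `(T X - F X, G Y)` and then to
`(X, T Y - G Y)` gives `Cov(F X, G Y) ≤ T² Cov(X, Y)`. Each approximation error is a nonnegative
function supported on an interval of length `1/T`, so it changes the covariance by at most
`M / T`. Hence the covariance of the indicators is at most `T² Cov(X, Y) + 2M/T`, and
`T = √K / (2 Cov(X, Y))^{1/3}` with `K = max(2/π², 45M)` gives the bound since `4M² ≤ K³`.
-/

open MeasureTheory Filter Set
open scoped ENNReal Topology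

/-- Covariance of two real random variables (when the relevant integrals exist). -/
noncomputable def cov {Ω : Type*} [MeasurableSpace Ω] (P : Measure Ω) (U V : Ω → ℝ) : ℝ :=
  ∫ ω, U ω * V ω ∂P - (∫ ω, U ω ∂P) * ∫ ω, V ω ∂P

/-- The pair `(X, Y)` is associated : for all coordinatewise nondecreasing `f, g : ℝ² → ℝ`
for which the covariance exists, `Cov(f(X,Y), g(X,Y)) ≥ 0`. -/
def AssocPair {Ω : Type*} [MeasurableSpace Ω] (P : Measure Ω) (X Y : Ω → ℝ) : Prop :=
  ∀ f g : ℝ × ℝ → ℝ, Measurable f → Measurable g → Monotone f → Monotone g →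
    Integrable (fun ω => f (X ω, Y ω)) P → Integrable (fun ω => g (X ω, Y ω)) P →
    Integrable (fun ω => f (X ω, Y ω) * g (X ω, Y ω)) P →
    0 ≤ cov P (fun ω => f (X ω, Y ω)) (fun ω => g (X ω, Y ω))

section Integrability

variable {Ω : Type*} [MeasurableSpace Ω] {P : Measure Ω} {Z : Ω → ℝ} {H : ℝ → ℝ} {c : ℝ}

theorem integrable_comp_of_abs_le [IsFiniteMeasure P] (hZ : Measurable Z) (hH : Measurable H)
    (hHc : ∀ u, |H u| ≤ c) : Integrable (fun ω => H (Z ω)) P :=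
  .of_bound (hH.comp hZ).aestronglyMeasurable c (ae_of_all _ fun ω => hHc (Z ω))

theorem MeasureTheory.Integrable.comp_mul_of_abs_le {U : Ω → ℝ} (hU : Integrable U P)
    (hZ : Measurable Z) (hH : Measurable H) (hHc : ∀ u, |H u| ≤ c) :
    Integrable (fun ω => H (Z ω) * U ω) P :=
  hU.bdd_mul (hH.comp hZ).aestronglyMeasurable (ae_of_all _ fun ω => hHc (Z ω))

end Integrability

section Covariance

variable {Ω : Type*} [MeasurableSpace Ω] {P : Measure Ω}

theorem cov_comm (U V : Ω → ℝ) : cov P U V = cov P V U := by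
  simp only [cov, mul_comm]

theorem cov_neg_neg (U V : Ω → ℝ) : cov P (fun ω => -U ω) (fun ω => -V ω) = cov P U V := by
  simp only [cov, neg_mul_neg, integral_neg]

theorem cov_const_mul_left (t : ℝ) (U V : Ω → ℝ) :
    cov P (fun ω => t * U ω) V = t * cov P U V := by
  simp only [cov, mul_assoc, integral_const_mul]
  ring

theorem cov_sub_left {U V W : Ω → ℝ} (hU : Integrable U P) (hV : Integrable V P)
    (hUW : Integrable (fun ω => U ω * W ω) P) (hVW : Integrable (fun ω => V ω * W ω) P) :
    cov P (fun ω => U ω - V ω) W = cov P U W - cov P V W := by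
  simp only [cov, sub_mul]
  rw [integral_sub hUW hVW, integral_sub hU hV]
  ring

theorem cov_sub_right {U V W : Ω → ℝ} (hV : Integrable V P) (hW : Integrable W P)
    (hUV : Integrable (fun ω => U ω * V ω) P) (hUW : Integrable (fun ω => U ω * W ω) P) :
    cov P U (fun ω => V ω - W ω) = cov P U V - cov P U W := by
  simp only [cov, mul_sub]
  rw [integral_sub hUV hUW, integral_sub hV hW]
  ring

theorem neg_integral_le_cov [IsProbabilityMeasure P] {D V : Ω → ℝ} (hD : 0 ≤ D) (hV₀ : 0 ≤ V)
    (hV₁ : V ≤ 1) : -∫ ω, D ω ∂P ≤ cov P D V := by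
  have hDV : 0 ≤ ∫ ω, D ω * V ω ∂P := integral_nonneg fun ω => mul_nonneg (hD ω) (hV₀ ω)
  have hV : ∫ ω, V ω ∂P ≤ 1 := by
    simpa using integral_mono_of_nonneg (Eventually.of_forall hV₀)
      (integrable_const (μ := P) (1 : ℝ)) (Eventually.of_forall hV₁)
  have hD' : 0 ≤ ∫ ω, D ω ∂P := integral_nonneg hD
  unfold cov
  nlinarith

end Covariance

namespace AssocPair

variable {Ω : Type*} [MeasurableSpace Ω] {P : Measure Ω} {X Y : Ω → ℝ}

theorem cov_le_mul_cov (h : AssocPair P X Y) {T : ℝ} {f k g : ℝ × ℝ → ℝ}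
    (hf : Measurable f) (hk : Measurable k) (hg : Measurable g)
    (hfk : Monotone fun p => T * f p - k p) (hg_mono : Monotone g)
    (hfi : Integrable (fun ω => f (X ω, Y ω)) P) (hki : Integrable (fun ω => k (X ω, Y ω)) P)
    (hgi : Integrable (fun ω => g (X ω, Y ω)) P)
    (hfgi : Integrable (fun ω => f (X ω, Y ω) * g (X ω, Y ω)) P)
    (hkgi : Integrable (fun ω => k (X ω, Y ω) * g (X ω, Y ω)) P) :
    cov P (fun ω => k (X ω, Y ω)) (fun ω => g (X ω, Y ω))
      ≤ T * cov P (fun ω => f (X ω, Y ω)) (fun ω => g (X ω, Y ω)) := by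
  have hTfgi : Integrable (fun ω => T * f (X ω, Y ω) * g (X ω, Y ω)) P := by
    simpa only [mul_assoc] using hfgi.const_mul T
  have hassoc := h (fun p => T * f p - k p) g ((hf.const_mul T).sub hk) hg hfk hg_mono
    ((hfi.const_mul T).sub hki) hgi (by simp only [sub_mul]; exact hTfgi.sub hkgi)
  rw [cov_sub_left (hfi.const_mul T) hki hTfgi hkgi, cov_const_mul_left] at hassoc
  linarith

theorem cov_comp_le_sq_mul_cov [IsFiniteMeasure P] (h : AssocPair P X Y) (hX : Measurable X)
    (hY : Measurable Y) (hXi : Integrable X P) (hYi : Integrable Y P)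
    (hXYi : Integrable (fun ω => X ω * Y ω) P) {T c : ℝ} (hT : 0 ≤ T) {F G : ℝ → ℝ}
    (hF : Measurable F) (hG : Measurable G) (hFc : ∀ u, |F u| ≤ c) (hGc : ∀ u, |G u| ≤ c)
    (hF_lip : Monotone fun u => T * u - F u) (hG_lip : Monotone fun u => T * u - G u)
    (hG_mono : Monotone G) :
    cov P (fun ω => F (X ω)) (fun ω => G (Y ω)) ≤ T ^ 2 * cov P X Y := by
  have hGYi : Integrable (fun ω => G (Y ω)) P := integrable_comp_of_abs_le hY hG hGc
  have hGYXi : Integrable (fun ω => G (Y ω) * X ω) P := hXi.comp_mul_of_abs_le hY hG hGc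
  have hstep₁ : cov P (fun ω => F (X ω)) (fun ω => G (Y ω)) ≤ T * cov P X (fun ω => G (Y ω)) :=
    h.cov_le_mul_cov (f := Prod.fst) (k := F ∘ Prod.fst) (g := G ∘ Prod.snd) measurable_fst
      (hF.comp measurable_fst) (hG.comp measurable_snd) (fun p q hpq => hF_lip hpq.1)
      (fun p q hpq => hG_mono hpq.2) hXi (integrable_comp_of_abs_le hX hF hFc) hGYi
      (by simpa only [Function.comp_apply, mul_comm] using hGYXi)
      (hGYi.comp_mul_of_abs_le hX hF hFc)
  have hstep₂ : cov P (fun ω => G (Y ω)) X ≤ T * cov P Y X :=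
    h.cov_le_mul_cov (f := Prod.snd) (k := G ∘ Prod.snd) (g := Prod.fst) measurable_snd
      (hG.comp measurable_snd) measurable_fst (fun p q hpq => hG_lip hpq.2)
      (fun p q hpq => hpq.1) hYi hGYi hXi (by simpa only [mul_comm] using hXYi) hGYXi
  rw [cov_comm, cov_comm Y] at hstep₂
  nlinarith [mul_le_mul_of_nonneg_left hstep₂ hT]

end AssocPair

def rampIic (T x u : ℝ) : ℝ := max 0 (min 1 (1 - T * (u - x)))

section Ramp

variable {T : ℝ} (x : ℝ)

theorem rampIic_nonneg (u : ℝ) : 0 ≤ rampIic T x u := le_max_left _ _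

theorem rampIic_le_one (u : ℝ) : rampIic T x u ≤ 1 :=
  max_le zero_le_one (min_le_left _ _)

theorem abs_rampIic_le_one (u : ℝ) : |rampIic T x u| ≤ 1 := by
  rw [abs_of_nonneg (rampIic_nonneg x u)]
  exact rampIic_le_one x u

theorem measurable_rampIic : Measurable (rampIic T x) := by
  unfold rampIic
  fun_prop

theorem antitone_rampIic (hT : 0 ≤ T) : Antitone (rampIic T x) := fun u v huv =>
  max_le_max le_rfl (min_le_min le_rfl (by nlinarith))

theorem monotone_mul_add_rampIic (hT : 0 ≤ T) : Monotone fun u => T * u + rampIic T x u := by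
  intro u v huv
  have := mul_le_mul_of_nonneg_left huv hT
  simp only [rampIic, max_def, min_def]
  split_ifs <;> linarith

theorem indicator_Iic_le_rampIic (hT : 0 ≤ T) (u : ℝ) :
    (Iic x).indicator 1 u ≤ rampIic T x u := by
  refine indicator_apply_le' (fun hu => ?_) fun _ => rampIic_nonneg x u
  have : 0 ≤ T * (x - u) := mul_nonneg hT (sub_nonneg.2 hu)
  simp only [Pi.one_apply, rampIic]
  exact le_max_of_le_right (le_min le_rfl (by linarith))

theorem rampIic_sub_indicator_le (hT : 0 < T) (u : ℝ) :
    rampIic T x u - (Iic x).indicator 1 u ≤ (Ioc x (x + T⁻¹)).indicator 1 u := by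
  by_cases hux : u ≤ x
  · have hIoc : u ∉ Ioc x (x + T⁻¹) := fun h => not_lt.2 hux h.1
    simp only [indicator_of_mem (mem_Iic.2 hux), indicator_of_notMem hIoc, Pi.one_apply]
    linarith [rampIic_le_one (T := T) x u]
  rw [indicator_of_notMem (fun h => hux (mem_Iic.1 h)), sub_zero]
  by_cases hu : u ≤ x + T⁻¹
  · rw [indicator_of_mem (show u ∈ Ioc x (x + T⁻¹) from ⟨not_le.1 hux, hu⟩)]
    exact rampIic_le_one x u
  · have : 1 ≤ T * (u - x) := by
      rw [← mul_inv_cancel₀ hT.ne']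
      exact mul_le_mul_of_nonneg_left (by linarith) hT.le
    rw [indicator_of_notMem (show u ∉ Ioc x (x + T⁻¹) from fun h => hu h.2)]
    exact max_le le_rfl (min_le_of_right_le (by linarith))

end Ramp

section Density

variable {Ω : Type*} [MeasurableSpace Ω] {P : Measure Ω} {M : ℝ}

theorem measureReal_preimage_Ioc_le_of_density_le {X : Ω → ℝ} (hX : Measurable X) {f : ℝ → ℝ}
    (hM : 0 ≤ M) (hf : ∀ u, f u ≤ M)
    (hdX : P.map X = volume.withDensity fun u => ENNReal.ofReal (f u)) {a b : ℝ} (hab : a ≤ b) :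
    P.real (X ⁻¹' Ioc a b) ≤ M * (b - a) := by
  refine ENNReal.toReal_le_of_le_ofReal (mul_nonneg hM (sub_nonneg.2 hab)) ?_
  calc P (X ⁻¹' Ioc a b) = P.map X (Ioc a b) := (Measure.map_apply hX measurableSet_Ioc).symm
    _ = ∫⁻ u in Ioc a b, ENNReal.ofReal (f u) := by
      rw [hdX, withDensity_apply _ measurableSet_Ioc]
    _ ≤ ∫⁻ _ in Ioc a b, ENNReal.ofReal M :=
      lintegral_mono fun u => ENNReal.ofReal_le_ofReal (hf u)
    _ = ENNReal.ofReal (M * (b - a)) := by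
      rw [setLIntegral_const, Real.volume_Ioc, ENNReal.ofReal_mul hM]

theorem integral_rampIic_sub_indicator_le [IsFiniteMeasure P] {Z : Ω → ℝ} {T : ℝ} (hT : 0 < T)
    (hZ : ∀ a b, a ≤ b → P.real (Z ⁻¹' Ioc a b) ≤ M * (b - a)) (z : ℝ) :
    ∫ ω, rampIic T z (Z ω) - (Iic z).indicator 1 (Z ω) ∂P ≤ M / T := by
  have hle := integral_le_measure (μ := P) (s := Z ⁻¹' Ioc z (z + T⁻¹))
    (f := fun ω => rampIic T z (Z ω) - (Iic z).indicator 1 (Z ω))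
    (fun ω hω => (rampIic_sub_indicator_le z hT (Z ω)).trans_eq (indicator_of_mem hω 1))
    (fun ω hω => (rampIic_sub_indicator_le z hT (Z ω)).trans_eq (indicator_of_notMem hω 1))
  calc ∫ ω, rampIic T z (Z ω) - (Iic z).indicator 1 (Z ω) ∂P
      ≤ P.real (Z ⁻¹' Ioc z (z + T⁻¹)) :=
        (ENNReal.ofReal_le_iff_le_toReal (measure_ne_top _ _)).1 hle
    _ ≤ M * (z + T⁻¹ - z) := hZ _ _ (by simp [hT.le])
    _ = M / T := by ring

end Density

theorem AssocPair.cov_indicator_Iic_le {Ω : Type*} [MeasurableSpace Ω] {P : Measure Ω}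
    [IsProbabilityMeasure P] {X Y : Ω → ℝ} (h : AssocPair P X Y) (hX : Measurable X)
    (hY : Measurable Y) (hXi : Integrable X P) (hYi : Integrable Y P)
    (hXYi : Integrable (fun ω => X ω * Y ω) P) {M T : ℝ} (hT : 0 < T)
    (hXM : ∀ a b, a ≤ b → P.real (X ⁻¹' Ioc a b) ≤ M * (b - a))
    (hYM : ∀ a b, a ≤ b → P.real (Y ⁻¹' Ioc a b) ≤ M * (b - a)) (x y : ℝ) :
    cov P (fun ω => (Iic x).indicator 1 (X ω)) (fun ω => (Iic y).indicator 1 (Y ω))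
      ≤ T ^ 2 * cov P X Y + 2 * M / T := by
  have hI : ∀ z, Measurable ((Iic z).indicator (1 : ℝ → ℝ)) := fun z =>
    measurable_one.indicator measurableSet_Iic
  have hI₀ : ∀ z u, 0 ≤ (Iic z).indicator (1 : ℝ → ℝ) u := fun z u =>
    indicator_nonneg (fun _ _ => zero_le_one) u
  have hI₁ : ∀ z u, (Iic z).indicator (1 : ℝ → ℝ) u ≤ 1 := fun z u =>
    indicator_apply_le' (fun _ => le_rfl) (fun _ => zero_le_one)
  have hIc : ∀ z u, |(Iic z).indicator (1 : ℝ → ℝ) u| ≤ 1 := fun z u =>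
    abs_le.2 ⟨by linarith [hI₀ z u], hI₁ z u⟩
  have hρ : ∀ z, Measurable (rampIic T z) := measurable_rampIic
  have hρc : ∀ z u, |rampIic T z u| ≤ 1 := abs_rampIic_le_one
  have hIY := integrable_comp_of_abs_le (P := P) hY (hI y) (hIc y)
  have hρY := integrable_comp_of_abs_le (P := P) hY (hρ y) (hρc y)
  have hsplitX := cov_sub_left (integrable_comp_of_abs_le hX (hρ x) (hρc x))
    (integrable_comp_of_abs_le hX (hI x) (hIc x)) (hρY.comp_mul_of_abs_le hX (hρ x) (hρc x))
    (hρY.comp_mul_of_abs_le hX (hI x) (hIc x))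
  have hsplitY := cov_sub_right hρY hIY (hρY.comp_mul_of_abs_le hX (hI x) (hIc x))
    (hIY.comp_mul_of_abs_le hX (hI x) (hIc x))
  have hsmooth : cov P (fun ω => rampIic T x (X ω)) (fun ω => rampIic T y (Y ω))
      ≤ T ^ 2 * cov P X Y := by
    rw [← cov_neg_neg]
    refine h.cov_comp_le_sq_mul_cov (F := fun u => -rampIic T x u) (G := fun u => -rampIic T y u)
      hX hY hXi hYi hXYi hT.le (hρ x).neg (hρ y).neg
      (fun u => (abs_neg _).trans_le (hρc x u)) (fun u => (abs_neg _).trans_le (hρc y u))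
      ?_ ?_ (antitone_rampIic y hT.le).neg
    all_goals simpa only [sub_neg_eq_add] using monotone_mul_add_rampIic _ hT.le
  have hcorrX : -(M / T) ≤ cov P (fun ω => rampIic T x (X ω) - (Iic x).indicator 1 (X ω))
      (fun ω => rampIic T y (Y ω)) :=
    (neg_le_neg (integral_rampIic_sub_indicator_le hT hXM x)).trans <| neg_integral_le_cov
      (fun ω => sub_nonneg.2 (indicator_Iic_le_rampIic x hT.le _))
      (fun ω => rampIic_nonneg y _) (fun ω => rampIic_le_one y _)
  have hcorrY : -(M / T) ≤ cov P (fun ω => (Iic x).indicator 1 (X ω))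
      (fun ω => rampIic T y (Y ω) - (Iic y).indicator 1 (Y ω)) := by
    rw [cov_comm]
    exact (neg_le_neg (integral_rampIic_sub_indicator_le hT hYM y)).trans <| neg_integral_le_cov
      (fun ω => sub_nonneg.2 (indicator_Iic_le_rampIic y hT.le _))
      (fun ω => hI₀ x _) (fun ω => hI₁ x _)
  linarith [show 2 * M / T = M / T + M / T by ring]

theorem four_mul_sq_le_max_cube {M : ℝ} (hM : 0 ≤ M) :
    4 * M ^ 2 ≤ max (2 / Real.pi ^ 2) (45 * M) ^ 3 := by
  have hπ : Real.pi ^ 2 < 4 ^ 2 := pow_lt_pow_left₀ Real.pi_lt_four Real.pi_pos.le two_ne_zero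
  have h₁ : 1 / 8 ≤ max (2 / Real.pi ^ 2) (45 * M) :=
    le_max_of_le_left (by rw [div_le_div_iff₀ (by norm_num) (by positivity)]; linarith)
  have h₂ : 45 * M ≤ max (2 / Real.pi ^ 2) (45 * M) := le_max_right _ _
  nlinarith [mul_le_mul h₂ h₂ (by positivity) (by linarith)]

theorem exists_sq_mul_add_div_le {C M K : ℝ} (hC : 0 < C) (hK : 0 < K)
    (hMK : 4 * M ^ 2 ≤ K ^ 3) :
    ∃ T > 0, T ^ 2 * C + 2 * M / T ≤ 3 * 2 ^ (-(2 : ℝ) / 3) * K * C ^ ((1 : ℝ) / 3) := by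
  set u := (2 * C) ^ ((1 : ℝ) / 3)
  have hu : 0 < u := by positivity
  have hu3 : u ^ 3 = 2 * C := by
    rw [← Real.rpow_natCast, ← Real.rpow_mul (by positivity)]
    norm_num
  have hRHS : 2 ^ (-(2 : ℝ) / 3) * C ^ ((1 : ℝ) / 3) = u / 2 := by
    rw [show u = 2 ^ ((1 : ℝ) / 3) * C ^ ((1 : ℝ) / 3) from Real.mul_rpow zero_le_two hC.le,
      show -(2 : ℝ) / 3 = 1 / 3 - 1 by norm_num, Real.rpow_sub two_pos, Real.rpow_one]
    ring
  set s := √K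
  have hs : 0 < s := Real.sqrt_pos.2 hK
  have hs2 : s ^ 2 = K := Real.sq_sqrt hK.le
  have hMs : 2 * M ≤ s ^ 3 := by
    have : K ^ 3 = (s ^ 3) ^ 2 := by rw [← hs2]; ring
    nlinarith [pow_pos hs 3]
  refine ⟨s / u, div_pos hs hu, ?_⟩
  calc (s / u) ^ 2 * C + 2 * M / (s / u) = s ^ 2 * u / 2 + 2 * M * u / s := by
        field_simp
        linear_combination (-s ^ 3) * hu3
    _ ≤ s ^ 2 * u / 2 + s ^ 2 * u := by
        gcongr
        rw [div_le_iff₀ hs]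
        nlinarith
    _ = 3 * 2 ^ (-(2 : ℝ) / 3) * K * C ^ ((1 : ℝ) / 3) := by
        rw [← hs2]
        linear_combination (-3 * s ^ 2) * hRHS

theorem cov_indicator_le_cuberoot_of_associated_general
    {Ω : Type*} [MeasurableSpace Ω] (P : Measure Ω) [IsProbabilityMeasure P]
    (X Y : Ω → ℝ) (hXm : Measurable X) (hYm : Measurable Y)
    (hassoc : AssocPair P X Y)
    -- the covariance of X and Y exists
    (hXi : Integrable X P) (hYi : Integrable Y P)
    (hXYi : Integrable (fun ω => X ω * Y ω) P)
    -- absolutely continuous distributions with densities bounded by M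
    (M : ℝ) (fX fY : ℝ → ℝ)
    (hfX_nonneg : ∀ x, 0 ≤ fX x)
    (hfX_bdd : ∀ x, fX x ≤ M) (hfY_bdd : ∀ x, fY x ≤ M)
    (hdX : Measure.map X P = MeasureTheory.volume.withDensity fun x => ENNReal.ofReal (fX x))
    (hdY : Measure.map Y P = MeasureTheory.volume.withDensity fun x => ENNReal.ofReal (fY x))
    -- positive covariance
    (hcov_pos : 0 < cov P X Y) :
    ∀ x y : ℝ,
      cov P (fun ω => Set.indicator (Set.Iic x) (1 : ℝ → ℝ) (X ω))
            (fun ω => Set.indicator (Set.Iic y) (1 : ℝ → ℝ) (Y ω))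
        ≤ 3 * (2 : ℝ) ^ (-(2 : ℝ) / 3) * max (2 / Real.pi ^ 2) (45 * M)
            * cov P X Y ^ ((1 : ℝ) / 3) := by
  intro x y
  have hM : 0 ≤ M := (hfX_nonneg 0).trans (hfX_bdd 0)
  obtain ⟨T, hT, hbound⟩ := exists_sq_mul_add_div_le hcov_pos
    (lt_max_of_lt_left (by positivity)) (four_mul_sq_le_max_cube hM)
  exact (hassoc.cov_indicator_Iic_le hXm hYm hXi hYi hXYi hT
    (fun _ _ => measureReal_preimage_Ioc_le_of_density_le hXm hM hfX_bdd hdX)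
    (fun _ _ => measureReal_preimage_Ioc_le_of_density_le hYm hM hfY_bdd hdY) x y).trans hbound

theorem cov_indicator_le_cuberoot_of_associated
    {Ω : Type*} [MeasurableSpace Ω] (P : Measure Ω) [IsProbabilityMeasure P]
    (X Y : Ω → ℝ) (hXm : Measurable X) (hYm : Measurable Y)
    (hassoc : AssocPair P X Y)
    -- the covariance of X and Y exists
    (hXi : Integrable X P) (hYi : Integrable Y P)
    (hXYi : Integrable (fun ω => X ω * Y ω) P)
    -- absolutely continuous distributions with densities bounded by M
    (M : ℝ) (fX fY : ℝ → ℝ)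
    (hfX_nonneg : ∀ x, 0 ≤ fX x) (hfY_nonneg : ∀ x, 0 ≤ fY x)
    (hfX_bdd : ∀ x, fX x ≤ M) (hfY_bdd : ∀ x, fY x ≤ M)
    (hdX : Measure.map X P = MeasureTheory.volume.withDensity fun x => ENNReal.ofReal (fX x))
    (hdY : Measure.map Y P = MeasureTheory.volume.withDensity fun x => ENNReal.ofReal (fY x))
    -- positive covariance
    (hcov_pos : 0 < cov P X Y) :
    ∀ x y : ℝ,
      cov P (fun ω => Set.indicator (Set.Iic x) (1 : ℝ → ℝ) (X ω))
            (fun ω => Set.indicator (Set.Iic y) (1 : ℝ → ℝ) (Y ω))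
        ≤ 3 * (2 : ℝ) ^ (-(2 : ℝ) / 3) * max (2 / Real.pi ^ 2) (45 * M)
            * cov P X Y ^ ((1 : ℝ) / 3) :=
  cov_indicator_le_cuberoot_of_associated_general P X Y hXm hYm hassoc hXi hYi hXYi M fX fY
    hfX_nonneg hfX_bdd hfY_bdd hdX hdY hcov_pos
end

section
/- Let 𝒜₁ and 𝒜₂ be two sub-σ-algebras of a probability space, let p > 1 and q > 1 with 1/p + 1/q = 1, and let X be an 𝒜₁-measurable random variable in L^p and Y an 𝒜₂-measurable random variable in L^q. Then Cov(X, Y) ≤ 2·φ(𝒜₁, 𝒜₂)^{1/p}·‖X‖_p·‖Y‖_q. Moreover, 0 ≤ φ(𝒜₁, 𝒜₂) ≤ 1. -/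
open MeasureTheory Filter Set
open scoped ENNReal Topology

/-- The φ-mixing coefficient between two sub-σ-algebras. -/
noncomputable def phiCoef {Ω : Type*} [MeasurableSpace Ω] (P : Measure Ω)
    (m₁ m₂ : MeasurableSpace Ω) : ℝ :=
  sSup {r : ℝ | ∃ A B : Set Ω, MeasurableSet[m₁] A ∧ MeasurableSet[m₂] B ∧ P A ≠ 0 ∧
    r = |(P B).toReal - (P (A ∩ B)).toReal / (P A).toReal|}

/-!
Approximate `X` and `Y` by `𝒜₁`- and `𝒜₂`-measurable functions `f = ∑ xᵢ 1_{Aᵢ}`, `g = ∑ yⱼ 1_{Bⱼ}`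
of finite range, converging pointwise and dominated by `2|X|`, `2|Y|`; by dominated convergence it
suffices to prove the bound for `f` and `g`. There `Cov(f, g) = ∑ xᵢ yⱼ eᵢⱼ` with
`eᵢⱼ = P(Aᵢ ∩ Bⱼ) - P(Aᵢ) P(Bⱼ)`, and Hölder's inequality with weights `|eᵢⱼ|` gives
`Cov(f, g) ≤ (∑ |xᵢ|ᵖ |eᵢⱼ|)^{1/p} (∑ |yⱼ|^q |eᵢⱼ|)^{1/q}`. Splitting a row or a column of `e`
by the sign of its entries, `∑ⱼ |eᵢⱼ| ≤ 2 φ P(Aᵢ)` and `∑ᵢ |eᵢⱼ| ≤ 2 P(Bⱼ)`, so the two factors are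
at most `(2 φ E|f|ᵖ)^{1/p}` and `(2 E|g|^q)^{1/q}`.
-/

theorem Finset.sum_abs_le_two_mul {ι : Type*} (s : Finset ι) (F : ι → ℝ) {M : ℝ}
    (h : ∀ t ⊆ s, |∑ j ∈ t, F j| ≤ M) : ∑ j ∈ s, |F j| ≤ 2 * M := by
  classical
  have hpos := h (s.filter (0 ≤ F ·)) (Finset.filter_subset _ _)
  have hneg := h (s.filter (¬ 0 ≤ F ·)) (Finset.filter_subset _ _)
  rw [← Finset.sum_filter_add_sum_filter_not s (0 ≤ F ·),
    Finset.sum_congr rfl fun j hj => abs_of_nonneg (Finset.mem_filter.1 hj).2,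
    Finset.sum_congr rfl fun j hj => abs_of_neg (not_le.1 (Finset.mem_filter.1 hj).2),
    Finset.sum_neg_distrib]
  linarith [le_abs_self (∑ j ∈ s with 0 ≤ F j, F j), neg_abs_le (∑ j ∈ s with ¬ 0 ≤ F j, F j)]

theorem Real.inner_le_weight_mul_Lp_mul_Lq_of_nonneg {ι : Type*} (s : Finset ι) {p q : ℝ}
    (hpq : p.HolderConjugate q) {w f g : ι → ℝ} (hw : ∀ i ∈ s, 0 ≤ w i)
    (hf : ∀ i ∈ s, 0 ≤ f i) (hg : ∀ i ∈ s, 0 ≤ g i) :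
    ∑ i ∈ s, w i * f i * g i
      ≤ (∑ i ∈ s, w i * f i ^ p) ^ (1 / p) * (∑ i ∈ s, w i * g i ^ q) ^ (1 / q) := by
  have hsplit : ∀ i ∈ s, w i * f i * g i = (w i ^ (1 / p) * f i) * (w i ^ (1 / q) * g i) := by
    intro i hi
    rw [mul_mul_mul_comm, ← Real.rpow_add' (hw i hi) (by simp [hpq.inv_add_inv_eq_one]),
      hpq.one_div_add_one_div, div_one, Real.rpow_one, mul_assoc]
  have hpow : ∀ {r : ℝ}, r ≠ 0 → ∀ {a : ℝ}, 0 ≤ a → ∀ i ∈ s, 0 ≤ w i →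
      (w i ^ (1 / r) * a) ^ r = w i * a ^ r := by
    intro r hr a ha i _ hwi
    rw [Real.mul_rpow (Real.rpow_nonneg hwi _) ha, one_div, Real.rpow_inv_rpow hwi hr]
  rw [Finset.sum_congr rfl hsplit,
    Finset.sum_congr rfl fun i hi => (hpow hpq.ne_zero (hf i hi) i hi (hw i hi)).symm,
    Finset.sum_congr rfl fun i hi => (hpow hpq.symm.ne_zero (hg i hi) i hi (hw i hi)).symm]
  exact Real.inner_le_Lp_mul_Lq_of_nonneg s hpq
    (fun i hi => mul_nonneg (Real.rpow_nonneg (hw i hi) _) (hf i hi))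
    (fun i hi => mul_nonneg (Real.rpow_nonneg (hw i hi) _) (hg i hi))

lemma Measurable.exists_seq_finite_range_tendsto {Ω : Type*} {mΩ : MeasurableSpace Ω}
    {X : Ω → ℝ} (hX : Measurable X) :
    ∃ f : ℕ → Ω → ℝ, (∀ n, Measurable (f n)) ∧ (∀ n, ∃ s : Finset ℝ, ∀ ω, f n ω ∈ s) ∧
      (∀ n ω, ‖f n ω‖ ≤ 2 * ‖X ω‖) ∧ ∀ ω, Tendsto (fun n => f n ω) atTop (𝓝 (X ω)) := by
  let φ := SimpleFunc.approxOn X hX (range X ∪ {0}) 0 (by simp)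
  refine ⟨fun n => φ n, fun n => (φ n).measurable,
    fun n => ⟨(φ n).range, (φ n).mem_range_self⟩, fun n ω => ?_, fun ω => ?_⟩
  · rw [two_mul]
    exact SimpleFunc.norm_approxOn_zero_le hX _ ω n
  · exact SimpleFunc.tendsto_approxOn hX _ (subset_closure (Or.inl (mem_range_self ω)))

lemma integral_comp_eq_sum_of_mem_finset {Ω α : Type*} [MeasurableSpace Ω] (μ : Measure Ω)
    [IsFiniteMeasure μ]
    {F : Ω → α} {s : Finset α} (hFs : ∀ ω, F ω ∈ s)
    (hF : ∀ a ∈ s, MeasurableSet (F ⁻¹' {a})) (h : α → ℝ) :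
    ∫ ω, h (F ω) ∂μ = ∑ a ∈ s, h a * μ.real (F ⁻¹' {a}) := by
  classical
  have hsum : (fun ω => h (F ω))
      = fun ω => ∑ a ∈ s, (F ⁻¹' {a}).indicator (fun _ => h a) ω := by
    ext ω
    rw [Finset.sum_eq_single_of_mem (F ω) (hFs ω) fun a _ ha =>
      indicator_of_notMem (fun hω => ha hω.symm) _,
      indicator_of_mem (mem_preimage.2 (mem_singleton (F ω)))]
  rw [hsum, integral_finsetSum _ fun a ha => (integrable_const (h a)).indicator (hF a ha)]
  exact Finset.sum_congr rfl fun a ha => by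
    rw [integral_indicator_const _ (hF a ha), smul_eq_mul, mul_comm]

section DominatedConvergence

variable {Ω : Type*} [MeasurableSpace Ω] {μ : Measure Ω}

lemma toReal_eLpNorm_ofReal_eq {p : ℝ} (hp : 0 < p) {X : Ω → ℝ}
    (hX : AEStronglyMeasurable X μ) :
    (eLpNorm X (ENNReal.ofReal p) μ).toReal = (∫ ω, ‖X ω‖ ^ p ∂μ) ^ (1 / p) := by
  rw [toReal_eLpNorm hX, lpNorm_eq_integral_norm_rpow_toReal (by simpa) ENNReal.ofReal_ne_top hX,
    ENNReal.toReal_ofReal hp.le, one_div]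

lemma tendsto_integral_norm_rpow_of_dominated {p : ℝ} (hp : 0 < p) {f : ℕ → Ω → ℝ}
    {X F : Ω → ℝ} (hf : ∀ n, AEStronglyMeasurable (f n) μ) (hF : MemLp F (ENNReal.ofReal p) μ)
    (hfF : ∀ n, ∀ᵐ ω ∂μ, ‖f n ω‖ ≤ F ω)
    (hf_lim : ∀ᵐ ω ∂μ, Tendsto (fun n => f n ω) atTop (𝓝 (X ω))) :
    Tendsto (fun n => ∫ ω, ‖f n ω‖ ^ p ∂μ) atTop (𝓝 (∫ ω, ‖X ω‖ ^ p ∂μ)) := by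
  refine tendsto_integral_of_dominated_convergence (fun ω => ‖F ω‖ ^ p)
    (fun n => ((hf n).norm.aemeasurable.pow_const p).aestronglyMeasurable)
    (by simpa [hp.le] using hF.integrable_norm_rpow (by simpa) ENNReal.ofReal_ne_top)
    (fun n => ?_) ?_
  · filter_upwards [hfF n] with ω hω
    rw [Real.norm_of_nonneg (by positivity)]
    exact Real.rpow_le_rpow (norm_nonneg _) (hω.trans (le_abs_self _)) hp.le
  · filter_upwards [hf_lim] with ω hω
    exact hω.norm.rpow_const (Or.inr hp.le)

lemma tendsto_cov_of_dominated [IsFiniteMeasure μ] {p q : ℝ} (hpq : p.HolderConjugate q)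
    {f g : ℕ → Ω → ℝ} {X Y F G : Ω → ℝ} (hf : ∀ n, AEStronglyMeasurable (f n) μ)
    (hg : ∀ n, AEStronglyMeasurable (g n) μ) (hF : MemLp F (ENNReal.ofReal p) μ)
    (hG : MemLp G (ENNReal.ofReal q) μ) (hfF : ∀ n, ∀ᵐ ω ∂μ, ‖f n ω‖ ≤ F ω)
    (hgG : ∀ n, ∀ᵐ ω ∂μ, ‖g n ω‖ ≤ G ω)
    (hf_lim : ∀ᵐ ω ∂μ, Tendsto (fun n => f n ω) atTop (𝓝 (X ω)))
    (hg_lim : ∀ᵐ ω ∂μ, Tendsto (fun n => g n ω) atTop (𝓝 (Y ω))) :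
    Tendsto (fun n => cov μ (f n) (g n)) atTop (𝓝 (cov μ X Y)) := by
  have := hpq.ennrealOfReal
  have hFG : Integrable (F * G) μ := hF.integrable_mul hG
  have h_prod : Tendsto (fun n => ∫ ω, f n ω * g n ω ∂μ) atTop (𝓝 (∫ ω, X ω * Y ω ∂μ)) := by
    refine tendsto_integral_of_dominated_convergence (F * G) (fun n => (hf n).mul (hg n)) hFG
      (fun n => ?_) ?_
    · filter_upwards [hfF n, hgG n] with ω hfω hgω
      rw [norm_mul]
      exact mul_le_mul hfω hgω (norm_nonneg _) ((norm_nonneg _).trans hfω)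
    · filter_upwards [hf_lim, hg_lim] with ω hfω hgω
      exact hfω.mul hgω
  exact h_prod.sub <|
    (tendsto_integral_of_dominated_convergence F hf
      (hF.integrable (ENNReal.one_le_ofReal.2 hpq.lt.le)) hfF hf_lim).mul
    (tendsto_integral_of_dominated_convergence G hg
      (hG.integrable (ENNReal.one_le_ofReal.2 hpq.symm.lt.le)) hgG hg_lim)

end DominatedConvergence

section PhiMixing

variable {Ω : Type*} {m₁ m₂ : MeasurableSpace Ω} [mΩ : MeasurableSpace Ω] {P : Measure Ω}

noncomputable def eventCov (P : Measure Ω) (A B : Set Ω) : ℝ :=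
  P.real (A ∩ B) - P.real A * P.real B

lemma eventCov_comm (A B : Set Ω) : eventCov P A B = eventCov P B A := by
  rw [eventCov, eventCov, inter_comm, mul_comm]

variable [IsProbabilityMeasure P]

lemma abs_measureReal_sub_div_le_one (A B : Set Ω) :
    |P.real B - P.real (A ∩ B) / P.real A| ≤ 1 :=
  abs_sub_le_of_nonneg_of_le measureReal_nonneg measureReal_le_one (by positivity)
    (div_le_one_of_le₀ (measureReal_mono inter_subset_left) measureReal_nonneg)

lemma le_phiCoef {A B : Set Ω} (hA : MeasurableSet[m₁] A) (hB : MeasurableSet[m₂] B)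
    (hPA : P A ≠ 0) :
    |P.real B - P.real (A ∩ B) / P.real A| ≤ phiCoef P m₁ m₂ :=
  le_csSup ⟨1, by rintro _ ⟨A, B, -, -, -, rfl⟩; exact abs_measureReal_sub_div_le_one A B⟩
    ⟨A, B, hA, hB, hPA, rfl⟩

lemma phiCoef_nonneg : 0 ≤ phiCoef P m₁ m₂ := by
  simpa using le_phiCoef (P := P) (MeasurableSet.univ (m := m₁)) (MeasurableSet.univ (m := m₂))
    (by simp)

lemma phiCoef_le_one : phiCoef P m₁ m₂ ≤ 1 :=
  csSup_le ⟨_, univ, univ, .univ, .univ, by simp, rfl⟩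
    (by rintro _ ⟨A, B, -, -, -, rfl⟩; exact abs_measureReal_sub_div_le_one A B)

lemma abs_eventCov_le_phiCoef {A B : Set Ω} (hA : MeasurableSet[m₁] A)
    (hB : MeasurableSet[m₂] B) : |eventCov P A B| ≤ phiCoef P m₁ m₂ * P.real A := by
  by_cases hPA : P A = 0
  · simp [eventCov, measureReal_def, hPA, measure_inter_null_of_null_left B hPA]
  have hA_pos : 0 < P.real A := ENNReal.toReal_pos hPA (measure_ne_top _ _)
  calc |eventCov P A B| = |P.real B - P.real (A ∩ B) / P.real A| * P.real A := by
        rw [eventCov, ← abs_of_pos hA_pos, ← abs_mul, abs_of_pos hA_pos, abs_sub_comm, sub_mul,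
          div_mul_cancel₀ _ hA_pos.ne', mul_comm]
    _ ≤ phiCoef P m₁ m₂ * P.real A := by gcongr; exact le_phiCoef hA hB hPA

lemma abs_eventCov_le (A B : Set Ω) : |eventCov P A B| ≤ P.real B :=
  abs_sub_le_of_nonneg_of_le measureReal_nonneg (measureReal_mono inter_subset_right)
    (by positivity) (mul_le_of_le_one_left measureReal_nonneg measureReal_le_one)

lemma sum_eventCov_preimage_singleton (A : Set Ω) {g : Ω → ℝ} (hg : Measurable g)
    (u : Finset ℝ) : ∑ y ∈ u, eventCov P A (g ⁻¹' {y}) = eventCov P A (g ⁻¹' u) := by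
  have hfib : ∀ y ∈ u, MeasurableSet (g ⁻¹' {y}) := fun y _ => hg (measurableSet_singleton y)
  simp_rw [eventCov, Finset.sum_sub_distrib, ← Finset.mul_sum,
    sum_measureReal_preimage_singleton (μ := P) u hfib,
    inter_comm A, ← measureReal_restrict_apply (hg (measurableSet_singleton _)),
    ← measureReal_restrict_apply (hg u.measurableSet),
    sum_measureReal_preimage_singleton (μ := P.restrict A) u hfib]

lemma sum_abs_eventCov_le_phiCoef (hm₂ : m₂ ≤ mΩ) {A : Set Ω} (hA : MeasurableSet[m₁] A)
    {g : Ω → ℝ} (hg : Measurable[m₂] g) (t : Finset ℝ) :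
    ∑ y ∈ t, |eventCov P A (g ⁻¹' {y})| ≤ 2 * (phiCoef P m₁ m₂ * P.real A) :=
  Finset.sum_abs_le_two_mul t _ fun u _ => by
    rw [sum_eventCov_preimage_singleton A (hg.mono hm₂ le_rfl)]
    exact abs_eventCov_le_phiCoef hA (hg u.measurableSet)

lemma sum_abs_eventCov_le (B : Set Ω) {f : Ω → ℝ} (hf : Measurable f) (s : Finset ℝ) :
    ∑ x ∈ s, |eventCov P (f ⁻¹' {x}) B| ≤ 2 * P.real B :=
  Finset.sum_abs_le_two_mul s _ fun u _ => by
    simp_rw [eventCov_comm _ B]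
    rw [sum_eventCov_preimage_singleton B hf, eventCov_comm]
    exact abs_eventCov_le _ _

lemma cov_eq_sum_eventCov {f g : Ω → ℝ} (hf : Measurable f) (hg : Measurable g)
    {s t : Finset ℝ} (hfs : ∀ ω, f ω ∈ s) (hgt : ∀ ω, g ω ∈ t) :
    cov P f g = ∑ z ∈ s ×ˢ t, z.1 * z.2 * eventCov P (f ⁻¹' {z.1}) (g ⁻¹' {z.2}) := by
  have hfib (z : ℝ × ℝ) : (fun ω => (f ω, g ω)) ⁻¹' {z} = f ⁻¹' {z.1} ∩ g ⁻¹' {z.2} := by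
    rw [← mk_preimage_prod, singleton_prod_singleton]
  have hfg := integral_comp_eq_sum_of_mem_finset P (s := s ×ˢ t)
    (fun ω => Finset.mem_product.2 ⟨hfs ω, hgt ω⟩)
    (fun z _ => hfib z ▸ (hf (measurableSet_singleton _)).inter (hg (measurableSet_singleton _)))
    (fun z => z.1 * z.2)
  have hf_int := integral_comp_eq_sum_of_mem_finset P hfs
    (fun x _ => hf (measurableSet_singleton x)) (fun x => x)
  have hg_int := integral_comp_eq_sum_of_mem_finset P hgt
    (fun y _ => hg (measurableSet_singleton y)) (fun y => y)
  rw [cov, hfg, hf_int, hg_int, Finset.sum_mul_sum, ← Finset.sum_product',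
    ← Finset.sum_sub_distrib]
  refine Finset.sum_congr rfl fun z _ => ?_
  rw [hfib, eventCov]
  ring

lemma sum_abs_eventCov_mul_norm_rpow_le_phiCoef (hm₁ : m₁ ≤ mΩ) (hm₂ : m₂ ≤ mΩ)
    {f g : Ω → ℝ} (hf : Measurable[m₁] f) (hg : Measurable[m₂] g) {s : Finset ℝ}
    (hfs : ∀ ω, f ω ∈ s) (t : Finset ℝ) (r : ℝ) :
    ∑ z ∈ s ×ˢ t, |eventCov P (f ⁻¹' {z.1}) (g ⁻¹' {z.2})| * ‖z.1‖ ^ r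
      ≤ 2 * phiCoef P m₁ m₂ * ∫ ω, ‖f ω‖ ^ r ∂P := by
  rw [integral_comp_eq_sum_of_mem_finset P hfs
      (fun x _ => hf.mono hm₁ le_rfl (measurableSet_singleton x)) (‖·‖ ^ r),
    Finset.mul_sum, Finset.sum_product]
  gcongr with x
  dsimp only
  rw [← Finset.sum_mul, mul_comm, mul_left_comm, mul_assoc 2]
  gcongr
  exact sum_abs_eventCov_le_phiCoef hm₂ (hf (measurableSet_singleton x)) hg t

lemma sum_abs_eventCov_mul_norm_rpow_le {f g : Ω → ℝ} (hf : Measurable f) (hg : Measurable g)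
    (s : Finset ℝ) {t : Finset ℝ} (hgt : ∀ ω, g ω ∈ t) (r : ℝ) :
    ∑ z ∈ s ×ˢ t, |eventCov P (f ⁻¹' {z.1}) (g ⁻¹' {z.2})| * ‖z.2‖ ^ r
      ≤ 2 * ∫ ω, ‖g ω‖ ^ r ∂P := by
  rw [integral_comp_eq_sum_of_mem_finset P hgt (fun y _ => hg (measurableSet_singleton y))
      (‖·‖ ^ r),
    Finset.mul_sum, Finset.sum_product_right]
  gcongr with y
  dsimp only
  rw [← Finset.sum_mul, mul_comm, mul_left_comm]
  gcongr
  exact sum_abs_eventCov_le (g ⁻¹' {y}) hf s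

theorem cov_le_of_mem_finset (hm₁ : m₁ ≤ mΩ) (hm₂ : m₂ ≤ mΩ) {p q : ℝ}
    (hpq : p.HolderConjugate q) {f g : Ω → ℝ} (hf : Measurable[m₁] f) (hg : Measurable[m₂] g)
    {s t : Finset ℝ} (hfs : ∀ ω, f ω ∈ s) (hgt : ∀ ω, g ω ∈ t) :
    cov P f g ≤ 2 * phiCoef P m₁ m₂ ^ (1 / p) * (∫ ω, ‖f ω‖ ^ p ∂P) ^ (1 / p)
      * (∫ ω, ‖g ω‖ ^ q ∂P) ^ (1 / q) := by
  have := hpq.pos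
  have := hpq.symm.pos
  have hφ : 0 ≤ phiCoef P m₁ m₂ := phiCoef_nonneg
  have hf' : Measurable f := hf.mono hm₁ le_rfl
  have hg' : Measurable g := hg.mono hm₂ le_rfl
  have h_two : (2 : ℝ) ^ (1 / p) * 2 ^ (1 / q) = 2 := by
    rw [← Real.rpow_add two_pos, hpq.one_div_add_one_div, div_one, Real.rpow_one]
  set e : ℝ × ℝ → ℝ := fun z => eventCov P (f ⁻¹' {z.1}) (g ⁻¹' {z.2})
  calc cov P f g = ∑ z ∈ s ×ˢ t, z.1 * z.2 * e z := cov_eq_sum_eventCov hf' hg' hfs hgt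
    _ ≤ ∑ z ∈ s ×ˢ t, |e z| * ‖z.1‖ * ‖z.2‖ := Finset.sum_le_sum fun z _ => by
        refine (le_abs_self _).trans_eq ?_
        rw [abs_mul, abs_mul, Real.norm_eq_abs, Real.norm_eq_abs]
        ring
    _ ≤ (∑ z ∈ s ×ˢ t, |e z| * ‖z.1‖ ^ p) ^ (1 / p)
          * (∑ z ∈ s ×ˢ t, |e z| * ‖z.2‖ ^ q) ^ (1 / q) :=
        Real.inner_le_weight_mul_Lp_mul_Lq_of_nonneg _ hpq (fun _ _ => abs_nonneg _)
          (fun _ _ => norm_nonneg _) (fun _ _ => norm_nonneg _)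
    _ ≤ (2 * phiCoef P m₁ m₂ * ∫ ω, ‖f ω‖ ^ p ∂P) ^ (1 / p)
          * (2 * ∫ ω, ‖g ω‖ ^ q ∂P) ^ (1 / q) := by
        gcongr
        · exact sum_abs_eventCov_mul_norm_rpow_le_phiCoef hm₁ hm₂ hf hg hfs t p
        · exact sum_abs_eventCov_mul_norm_rpow_le hf' hg' s hgt q
    _ = _ := by
        rw [Real.mul_rpow (by positivity) (by positivity), Real.mul_rpow (by positivity) hφ,
          Real.mul_rpow (by positivity) (by positivity)]
        linear_combination (phiCoef P m₁ m₂ ^ (1 / p) * (∫ ω, ‖f ω‖ ^ p ∂P) ^ (1 / p)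
          * (∫ ω, ‖g ω‖ ^ q ∂P) ^ (1 / q)) * h_two

end PhiMixing

theorem cov_le_phi_mixing_general
    {Ω : Type*} (A1 A2 : MeasurableSpace Ω) [m : MeasurableSpace Ω]
    (hA1 : A1 ≤ m) (hA2 : A2 ≤ m)
    (P : Measure Ω) [IsProbabilityMeasure P]
    (p q : ℝ) (hp : 1 < p) (hpq : 1 / p + 1 / q = 1)
    (X Y : Ω → ℝ)
    (hXm : Measurable[A1] X) (hYm : Measurable[A2] Y)
    (hXp : MemLp X (ENNReal.ofReal p) P) (hYq : MemLp Y (ENNReal.ofReal q) P) :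
    cov P X Y ≤ 2 * phiCoef P A1 A2 ^ (1 / p)
        * (eLpNorm X (ENNReal.ofReal p) P).toReal
        * (eLpNorm Y (ENNReal.ofReal q) P).toReal
      ∧ 0 ≤ phiCoef P A1 A2 ∧ phiCoef P A1 A2 ≤ 1 := by
  have hpq' : p.HolderConjugate q :=
    Real.holderConjugate_iff.2 ⟨hp, by simpa only [one_div] using hpq⟩
  refine ⟨?_, phiCoef_nonneg, phiCoef_le_one⟩
  obtain ⟨f, hf, hf_fin, hfX, hf_lim⟩ := hXm.exists_seq_finite_range_tendsto
  obtain ⟨g, hg, hg_fin, hgY, hg_lim⟩ := hYm.exists_seq_finite_range_tendsto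
  have hf' n : AEStronglyMeasurable (f n) P := ((hf n).mono hA1 le_rfl).aestronglyMeasurable
  have hg' n : AEStronglyMeasurable (g n) P := ((hg n).mono hA2 le_rfl).aestronglyMeasurable
  have hF := hXp.norm.const_mul 2
  have hG := hYq.norm.const_mul 2
  have hfX' : ∀ n, ∀ᵐ ω ∂P, ‖f n ω‖ ≤ 2 * ‖X ω‖ := fun n => .of_forall (hfX n)
  have hgY' : ∀ n, ∀ᵐ ω ∂P, ‖g n ω‖ ≤ 2 * ‖Y ω‖ := fun n => .of_forall (hgY n)
  have h_cov := tendsto_cov_of_dominated hpq' hf' hg' hF hG hfX' hgY' (.of_forall hf_lim)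
    (.of_forall hg_lim)
  have h_normX := tendsto_integral_norm_rpow_of_dominated hpq'.pos hf' hF hfX' (.of_forall hf_lim)
  have h_normY :=
    tendsto_integral_norm_rpow_of_dominated hpq'.symm.pos hg' hG hgY' (.of_forall hg_lim)
  rw [toReal_eLpNorm_ofReal_eq hpq'.pos hXp.1, toReal_eLpNorm_ofReal_eq hpq'.symm.pos hYq.1]
  refine le_of_tendsto_of_tendsto' h_cov
    ((tendsto_const_nhds.mul (h_normX.rpow_const (Or.inr (one_div_nonneg.2 hpq'.pos.le)))).mul
      (h_normY.rpow_const (Or.inr (one_div_nonneg.2 hpq'.symm.pos.le)))) fun n => ?_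
  obtain ⟨s, hs⟩ := hf_fin n
  obtain ⟨t, ht⟩ := hg_fin n
  exact cov_le_of_mem_finset hA1 hA2 hpq' (hf n) (hg n) hs ht

theorem cov_le_phi_mixing
    {Ω : Type*} (A1 A2 : MeasurableSpace Ω) [m : MeasurableSpace Ω]
    (hA1 : A1 ≤ m) (hA2 : A2 ≤ m)
    (P : Measure Ω) [IsProbabilityMeasure P]
    (p q : ℝ) (hp : 1 < p) (hq : 1 < q) (hpq : 1 / p + 1 / q = 1)
    (X Y : Ω → ℝ)
    (hXm : Measurable[A1] X) (hYm : Measurable[A2] Y)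
    (hXp : MemLp X (ENNReal.ofReal p) P) (hYq : MemLp Y (ENNReal.ofReal q) P) :
    cov P X Y ≤ 2 * phiCoef P A1 A2 ^ (1 / p)
        * (eLpNorm X (ENNReal.ofReal p) P).toReal
        * (eLpNorm Y (ENNReal.ofReal q) P).toReal
      ∧ 0 ≤ phiCoef P A1 A2 ∧ phiCoef P A1 A2 ≤ 1 :=
  cov_le_phi_mixing_general A1 A2 (m := m) hA1 hA2 P p q hp hpq X Y hXm hYm hXp hYq
end
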